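/- If t is a strongly normalising proof-term of the LS²-calculus (with respect to ultra-reduction), then a • t is strongly normalising for any scalar a. -/
import Mathlib


namespace LS2

/-- Propositions of the LS²-calculus. -/
inductive Ty : Type where
  | var : String → Ty
  | one : Ty
  | lolli : Ty → Ty → Ty
  | tens : Ty → Ty → Ty
  | top : Ty
  | zero : Ty
  | withT : Ty → Ty → Ty
  | plus : Ty → Ty → Ty
  | bang : Ty → Ty
  | all : String → Ty → Ty
deriving DecidableEq

/-- Substitution (B/X)A of a proposition for a proposition variable:
`A.substT X B` substitutes `B` for `X` in `A`. -/
def Ty.substT : Ty → String → Ty → Ty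
  | .var Y, X, B => if Y = X then B else .var Y
  | .one, _, _ => .one
  | .lolli C D, X, B => .lolli (C.substT X B) (D.substT X B)
  | .tens C D, X, B => .tens (C.substT X B) (D.substT X B)
  | .top, _, _ => .top
  | .zero, _, _ => .zero
  | .withT C D, X, B => .withT (C.substT X B) (D.substT X B)
  | .plus C D, X, B => .plus (C.substT X B) (D.substT X B)
  | .bang C, X, B => .bang (C.substT X B)
  | .all Y C, X, B => if Y = X then .all Y C else .all Y (C.substT X B)

/-- Free proposition variables of a proposition. -/
def Ty.tfv : Ty → List String
  | .var Y => [Y]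
  | .one => []
  | .top => []
  | .zero => []
  | .lolli C D => C.tfv ++ D.tfv
  | .tens C D => C.tfv ++ D.tfv
  | .withT C D => C.tfv ++ D.tfv
  | .plus C D => C.tfv ++ D.tfv
  | .bang C => C.tfv
  | .all Y C => C.tfv.filter (· ≠ Y)

/-- Proof-terms of the LS²-calculus, with scalars in `S`. -/
inductive Tm (S : Type) : Type where
  | var : String → Tm S
  | sum : Tm S → Tm S → Tm S
  | prod : S → Tm S → Tm S
  | star : S → Tm S
  | elimOne : Tm S → Tm S → Tm S
  | lam : String → Ty → Tm S → Tm S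
  | app : Tm S → Tm S → Tm S
  | tens : Tm S → Tm S → Tm S
  | elimTens : Tm S → String → Ty → String → Ty → Tm S → Tm S
  | unit : Tm S
  | elimZero : Tm S → Tm S
  | pair : Tm S → Tm S → Tm S
  | elimWith1 : Tm S → String → Ty → Tm S → Tm S
  | elimWith2 : Tm S → String → Ty → Tm S → Tm S
  | inl : Tm S → Tm S
  | inr : Tm S → Tm S
  | elimPlus : Tm S → String → Ty → Tm S → String → Ty → Tm S → Tm S
  | bang : Tm S → Tm S
  | elimBang : Tm S → String → Ty → Tm S → Tm S
  | tlam : String → Tm S → Tm S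
  | tapp : Tm S → Ty → Tm S

variable {S : Type}

/-- Free proof-term variables. -/
def Tm.fv : Tm S → List String
  | .var y => [y]
  | .sum t u => t.fv ++ u.fv
  | .prod _ t => t.fv
  | .star _ => []
  | .elimOne t u => t.fv ++ u.fv
  | .lam y _ t => t.fv.filter (· ≠ y)
  | .app t u => t.fv ++ u.fv
  | .tens t u => t.fv ++ u.fv
  | .elimTens t x _ y _ u => t.fv ++ (u.fv.filter fun z => z ≠ x ∧ z ≠ y)
  | .unit => []
  | .elimZero t => t.fv
  | .pair t u => t.fv ++ u.fv
  | .elimWith1 t x _ u => t.fv ++ u.fv.filter (· ≠ x)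
  | .elimWith2 t x _ u => t.fv ++ u.fv.filter (· ≠ x)
  | .inl t => t.fv
  | .inr t => t.fv
  | .elimPlus t x _ u y _ v => t.fv ++ u.fv.filter (· ≠ x) ++ v.fv.filter (· ≠ y)
  | .bang t => t.fv
  | .elimBang t x _ u => t.fv ++ u.fv.filter (· ≠ x)
  | .tlam _ t => t.fv
  | .tapp t _ => t.fv

/-- Substitution (u/x)t of a proof-term for a proof-term variable:
`t.subst x u` substitutes `u` for `x` in `t`. -/
def Tm.subst : Tm S → String → Tm S → Tm S
  | .var y, x, u => if y = x then u else .var y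
  | .sum t₁ t₂, x, u => .sum (t₁.subst x u) (t₂.subst x u)
  | .prod a t, x, u => .prod a (t.subst x u)
  | .star a, _, _ => .star a
  | .elimOne t₁ t₂, x, u => .elimOne (t₁.subst x u) (t₂.subst x u)
  | .lam y A t, x, u => if y = x then .lam y A t else .lam y A (t.subst x u)
  | .app t₁ t₂, x, u => .app (t₁.subst x u) (t₂.subst x u)
  | .tens t₁ t₂, x, u => .tens (t₁.subst x u) (t₂.subst x u)
  | .elimTens t₁ y A z B t₂, x, u =>
      .elimTens (t₁.subst x u) y A z B (if y = x ∨ z = x then t₂ else t₂.subst x u)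
  | .unit, _, _ => .unit
  | .elimZero t, x, u => .elimZero (t.subst x u)
  | .pair t₁ t₂, x, u => .pair (t₁.subst x u) (t₂.subst x u)
  | .elimWith1 t₁ y A t₂, x, u =>
      .elimWith1 (t₁.subst x u) y A (if y = x then t₂ else t₂.subst x u)
  | .elimWith2 t₁ y A t₂, x, u =>
      .elimWith2 (t₁.subst x u) y A (if y = x then t₂ else t₂.subst x u)
  | .inl t, x, u => .inl (t.subst x u)
  | .inr t, x, u => .inr (t.subst x u)
  | .elimPlus t₁ y A t₂ z B t₃, x, u =>
      .elimPlus (t₁.subst x u) y A (if y = x then t₂ else t₂.subst x u)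
        z B (if z = x then t₃ else t₃.subst x u)
  | .bang t, x, u => .bang (t.subst x u)
  | .elimBang t₁ y A t₂, x, u =>
      .elimBang (t₁.subst x u) y A (if y = x then t₂ else t₂.subst x u)
  | .tlam X t, x, u => .tlam X (t.subst x u)
  | .tapp t A, x, u => .tapp (t.subst x u) A

/-- Substitution (B/X)t of a proposition for a proposition variable in a
proof-term: `t.substT X B`. -/
def Tm.substT : Tm S → String → Ty → Tm S
  | .var y, _, _ => .var y
  | .sum t₁ t₂, X, B => .sum (t₁.substT X B) (t₂.substT X B)
  | .prod a t, X, B => .prod a (t.substT X B)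
  | .star a, _, _ => .star a
  | .elimOne t₁ t₂, X, B => .elimOne (t₁.substT X B) (t₂.substT X B)
  | .lam y A t, X, B => .lam y (A.substT X B) (t.substT X B)
  | .app t₁ t₂, X, B => .app (t₁.substT X B) (t₂.substT X B)
  | .tens t₁ t₂, X, B => .tens (t₁.substT X B) (t₂.substT X B)
  | .elimTens t₁ y A z C t₂, X, B =>
      .elimTens (t₁.substT X B) y (A.substT X B) z (C.substT X B) (t₂.substT X B)
  | .unit, _, _ => .unit
  | .elimZero t, X, B => .elimZero (t.substT X B)
  | .pair t₁ t₂, X, B => .pair (t₁.substT X B) (t₂.substT X B)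
  | .elimWith1 t₁ y A t₂, X, B => .elimWith1 (t₁.substT X B) y (A.substT X B) (t₂.substT X B)
  | .elimWith2 t₁ y A t₂, X, B => .elimWith2 (t₁.substT X B) y (A.substT X B) (t₂.substT X B)
  | .inl t, X, B => .inl (t.substT X B)
  | .inr t, X, B => .inr (t.substT X B)
  | .elimPlus t₁ y A t₂ z C t₃, X, B =>
      .elimPlus (t₁.substT X B) y (A.substT X B) (t₂.substT X B) z (C.substT X B) (t₃.substT X B)
  | .bang t, X, B => .bang (t.substT X B)
  | .elimBang t₁ y A t₂, X, B => .elimBang (t₁.substT X B) y (A.substT X B) (t₂.substT X B)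
  | .tlam Y t, X, B => if Y = X then .tlam Y t else .tlam Y (t.substT X B)
  | .tapp t A, X, B => .tapp (t.substT X B) (A.substT X B)

/-- Parallel substitution of proof-terms for all proof-term variables. -/
def Tm.msubst : Tm S → (String → Tm S) → Tm S
  | .var y, σ => σ y
  | .sum t₁ t₂, σ => .sum (t₁.msubst σ) (t₂.msubst σ)
  | .prod a t, σ => .prod a (t.msubst σ)
  | .star a, _ => .star a
  | .elimOne t₁ t₂, σ => .elimOne (t₁.msubst σ) (t₂.msubst σ)
  | .lam y A t, σ => .lam y A (t.msubst (Function.update σ y (.var y)))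
  | .app t₁ t₂, σ => .app (t₁.msubst σ) (t₂.msubst σ)
  | .tens t₁ t₂, σ => .tens (t₁.msubst σ) (t₂.msubst σ)
  | .elimTens t₁ y A z B t₂, σ =>
      .elimTens (t₁.msubst σ) y A z B
        (t₂.msubst (Function.update (Function.update σ y (.var y)) z (.var z)))
  | .unit, _ => .unit
  | .elimZero t, σ => .elimZero (t.msubst σ)
  | .pair t₁ t₂, σ => .pair (t₁.msubst σ) (t₂.msubst σ)
  | .elimWith1 t₁ y A t₂, σ =>
      .elimWith1 (t₁.msubst σ) y A (t₂.msubst (Function.update σ y (.var y)))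
  | .elimWith2 t₁ y A t₂, σ =>
      .elimWith2 (t₁.msubst σ) y A (t₂.msubst (Function.update σ y (.var y)))
  | .inl t, σ => .inl (t.msubst σ)
  | .inr t, σ => .inr (t.msubst σ)
  | .elimPlus t₁ y A t₂ z B t₃, σ =>
      .elimPlus (t₁.msubst σ) y A (t₂.msubst (Function.update σ y (.var y)))
        z B (t₃.msubst (Function.update σ z (.var z)))
  | .bang t, σ => .bang (t.msubst σ)
  | .elimBang t₁ y A t₂, σ =>
      .elimBang (t₁.msubst σ) y A (t₂.msubst (Function.update σ y (.var y)))
  | .tlam Y t, σ => .tlam Y (t.msubst σ)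
  | .tapp t A, σ => .tapp (t.msubst σ) A

/-- Contexts: lists of variable–proposition declarations. -/
abbrev Ctx := List (String × Ty)

/-- Free proposition variables of a context. -/
def ctxTfv (Γ : Ctx) : List String := Γ.foldr (fun p l => p.2.tfv ++ l) []

/-- The typing rules of the LS²-calculus.  Sequents `Ξ;Γ ⊢ t : A` have a
non-linear context `Ξ` and a linear context `Γ`.  The flag `exp` gates the
exponential rules (ax, !ᵢ, !ₑ): `exp = true` is the full LS²-calculus, and
`exp = false` is its exponential-free fragment. -/
inductive Deriv (S : Type) (exp : Bool) : Ctx → Ctx → Tm S → Ty → Prop where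
  | exchL {Ξ Γ Γ' t A} : Γ.Perm Γ' → Deriv S exp Ξ Γ t A → Deriv S exp Ξ Γ' t A
  | exchN {Ξ Ξ' Γ t A} : Ξ.Perm Ξ' → Deriv S exp Ξ Γ t A → Deriv S exp Ξ' Γ t A
  | linAx {Ξ : Ctx} {x A} : Deriv S exp Ξ [(x, A)] (.var x) A
  | ax {Ξ : Ctx} {x A} : exp = true → (x, A) ∈ Ξ → Deriv S exp Ξ [] (.var x) A
  | sum {Ξ Γ t u A} : Deriv S exp Ξ Γ t A → Deriv S exp Ξ Γ u A →
      Deriv S exp Ξ Γ (.sum t u) A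
  | prod {Ξ Γ t A} (a : S) : Deriv S exp Ξ Γ t A → Deriv S exp Ξ Γ (.prod a t) A
  | oneI {Ξ : Ctx} (a : S) : Deriv S exp Ξ [] (.star a) .one
  | oneE {Ξ Γ Δ t u A} : Deriv S exp Ξ Γ t .one → Deriv S exp Ξ Δ u A →
      Deriv S exp Ξ (Γ ++ Δ) (.elimOne t u) A
  | lolliI {Ξ Γ x A t B} : Deriv S exp Ξ ((x, A) :: Γ) t B →
      Deriv S exp Ξ Γ (.lam x A t) (.lolli A B)
  | lolliE {Ξ Γ Δ t u A B} : Deriv S exp Ξ Γ t (.lolli A B) → Deriv S exp Ξ Δ u A →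
      Deriv S exp Ξ (Γ ++ Δ) (.app t u) B
  | tensI {Ξ Γ Δ t u A B} : Deriv S exp Ξ Γ t A → Deriv S exp Ξ Δ u B →
      Deriv S exp Ξ (Γ ++ Δ) (.tens t u) (.tens A B)
  | tensE {Ξ Γ Δ t x A y B u C} : Deriv S exp Ξ Γ t (.tens A B) →
      Deriv S exp Ξ ((x, A) :: (y, B) :: Δ) u C →
      Deriv S exp Ξ (Γ ++ Δ) (.elimTens t x A y B u) C
  | topI {Ξ Γ} : Deriv S exp Ξ Γ .unit .top
  | zeroE {Ξ Γ Δ t C} : Deriv S exp Ξ Γ t .zero →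
      Deriv S exp Ξ (Γ ++ Δ) (.elimZero t) C
  | withI {Ξ Γ t u A B} : Deriv S exp Ξ Γ t A → Deriv S exp Ξ Γ u B →
      Deriv S exp Ξ Γ (.pair t u) (.withT A B)
  | withE1 {Ξ Γ Δ t x A B u C} : Deriv S exp Ξ Γ t (.withT A B) →
      Deriv S exp Ξ ((x, A) :: Δ) u C →
      Deriv S exp Ξ (Γ ++ Δ) (.elimWith1 t x A u) C
  | withE2 {Ξ Γ Δ t x A B u C} : Deriv S exp Ξ Γ t (.withT A B) →
      Deriv S exp Ξ ((x, B) :: Δ) u C →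
      Deriv S exp Ξ (Γ ++ Δ) (.elimWith2 t x B u) C
  | plusI1 {Ξ Γ t A B} : Deriv S exp Ξ Γ t A → Deriv S exp Ξ Γ (.inl t) (.plus A B)
  | plusI2 {Ξ Γ t A B} : Deriv S exp Ξ Γ t B → Deriv S exp Ξ Γ (.inr t) (.plus A B)
  | plusE {Ξ Γ Δ t x A u y B v C} : Deriv S exp Ξ Γ t (.plus A B) →
      Deriv S exp Ξ ((x, A) :: Δ) u C → Deriv S exp Ξ ((y, B) :: Δ) v C →
      Deriv S exp Ξ (Γ ++ Δ) (.elimPlus t x A u y B v) C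
  | bangI {Ξ t A} : exp = true → Deriv S exp Ξ [] t A →
      Deriv S exp Ξ [] (.bang t) (.bang A)
  | bangE {Ξ Γ Δ t x A u B} : exp = true → Deriv S exp Ξ Γ t (.bang A) →
      Deriv S exp ((x, A) :: Ξ) Δ u B →
      Deriv S exp Ξ (Γ ++ Δ) (.elimBang t x A u) B
  | allI {Ξ Γ X t A} : Deriv S exp Ξ Γ t A → X ∉ ctxTfv Ξ → X ∉ ctxTfv Γ →
      Deriv S exp Ξ Γ (.tlam X t) (.all X A)
  | allE {Ξ Γ t X B A} : Deriv S exp Ξ Γ t (.all X B) →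
      Deriv S exp Ξ Γ (.tapp t A) (B.substT X A)

/-- One-step reduction of the LS²-calculus.  The flag `ultra` gates the three
ultra-reduction rules, the flag `exp` gates the rules dealing with the
exponential connective.  Plain reduction of the full calculus is
`Red S false true`. -/
inductive Red (S : Type) [Semiring S] (ultra exp : Bool) : Tm S → Tm S → Prop where
  -- beta rules
  | betaOne (a : S) (t) : Red S ultra exp (.elimOne (.star a) t) (.prod a t)
  | betaLam (x A t u) : Red S ultra exp (.app (.lam x A t) u) (t.subst x u)
  | betaTens (u v x A y B w) :
      Red S ultra exp (.elimTens (.tens u v) x A y B w) ((w.subst x u).subst y v)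
  | betaWith1 (t₁ t₂ x A v) :
      Red S ultra exp (.elimWith1 (.pair t₁ t₂) x A v) (v.subst x t₁)
  | betaWith2 (t₁ t₂ x A v) :
      Red S ultra exp (.elimWith2 (.pair t₁ t₂) x A v) (v.subst x t₂)
  | betaPlus1 (t x A v y B w) :
      Red S ultra exp (.elimPlus (.inl t) x A v y B w) (v.subst x t)
  | betaPlus2 (t x A v y B w) :
      Red S ultra exp (.elimPlus (.inr t) x A v y B w) (w.subst y t)
  | betaBang (t x A u) : exp = true →
      Red S ultra exp (.elimBang (.bang t) x A u) (u.subst x t)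
  | betaAll (X t A) : Red S ultra exp (.tapp (.tlam X t) A) (t.substT X A)
  -- commutation rules for ⊞
  | sumStar (a b : S) : Red S ultra exp (.sum (.star a) (.star b)) (.star (a + b))
  | sumLam (x A t u) :
      Red S ultra exp (.sum (.lam x A t) (.lam x A u)) (.lam x A (.sum t u))
  | sumElimTens (t u x A y B v) :
      Red S ultra exp (.elimTens (.sum t u) x A y B v)
        (.sum (.elimTens t x A y B v) (.elimTens u x A y B v))
  | sumUnit : Red S ultra exp (.sum .unit .unit) .unit
  | sumPair (t u v w) :
      Red S ultra exp (.sum (.pair t u) (.pair v w)) (.pair (.sum t v) (.sum u w))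
  | sumElimPlus (t u x A v y B w) :
      Red S ultra exp (.elimPlus (.sum t u) x A v y B w)
        (.sum (.elimPlus t x A v y B w) (.elimPlus u x A v y B w))
  | sumBang (t u) : exp = true →
      Red S ultra exp (.sum (.bang t) (.bang u)) (.bang (.sum t u))
  | sumTlam (X t u) :
      Red S ultra exp (.sum (.tlam X t) (.tlam X u)) (.tlam X (.sum t u))
  -- commutation rules for a •
  | prodStar (a b : S) : Red S ultra exp (.prod a (.star b)) (.star (a * b))
  | prodLam (a x A t) :
      Red S ultra exp (.prod a (.lam x A t)) (.lam x A (.prod a t))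
  | prodElimTens (a t x A y B v) :
      Red S ultra exp (.elimTens (.prod a t) x A y B v) (.prod a (.elimTens t x A y B v))
  | prodUnit (a : S) : Red S ultra exp (.prod a .unit) .unit
  | prodPair (a t u) :
      Red S ultra exp (.prod a (.pair t u)) (.pair (.prod a t) (.prod a u))
  | prodElimPlus (a t x A v y B w) :
      Red S ultra exp (.elimPlus (.prod a t) x A v y B w)
        (.prod a (.elimPlus t x A v y B w))
  | prodBang (a t) : exp = true →
      Red S ultra exp (.prod a (.bang t)) (.bang (.prod a t))
  | prodTlam (a X t) :
      Red S ultra exp (.prod a (.tlam X t)) (.tlam X (.prod a t))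
  -- ultra-reduction rules
  | ultraSumL (t u) : ultra = true → Red S ultra exp (.sum t u) t
  | ultraSumR (t u) : ultra = true → Red S ultra exp (.sum t u) u
  | ultraProd (a t) : ultra = true → Red S ultra exp (.prod a t) t
  -- congruence rules
  | congSumL {t t'} (u) : Red S ultra exp t t' → Red S ultra exp (.sum t u) (.sum t' u)
  | congSumR (t) {u u'} : Red S ultra exp u u' → Red S ultra exp (.sum t u) (.sum t u')
  | congProd (a) {t t'} : Red S ultra exp t t' → Red S ultra exp (.prod a t) (.prod a t')
  | congElimOneL {t t'} (u) : Red S ultra exp t t' →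
      Red S ultra exp (.elimOne t u) (.elimOne t' u)
  | congElimOneR (t) {u u'} : Red S ultra exp u u' →
      Red S ultra exp (.elimOne t u) (.elimOne t u')
  | congLam (x A) {t t'} : Red S ultra exp t t' → Red S ultra exp (.lam x A t) (.lam x A t')
  | congAppL {t t'} (u) : Red S ultra exp t t' → Red S ultra exp (.app t u) (.app t' u)
  | congAppR (t) {u u'} : Red S ultra exp u u' → Red S ultra exp (.app t u) (.app t u')
  | congTensL {t t'} (u) : Red S ultra exp t t' → Red S ultra exp (.tens t u) (.tens t' u)
  | congTensR (t) {u u'} : Red S ultra exp u u' → Red S ultra exp (.tens t u) (.tens t u')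
  | congElimTensL {t t'} (x A y B u) : Red S ultra exp t t' →
      Red S ultra exp (.elimTens t x A y B u) (.elimTens t' x A y B u)
  | congElimTensR (t x A y B) {u u'} : Red S ultra exp u u' →
      Red S ultra exp (.elimTens t x A y B u) (.elimTens t x A y B u')
  | congElimZero {t t'} : Red S ultra exp t t' →
      Red S ultra exp (.elimZero t) (.elimZero t')
  | congPairL {t t'} (u) : Red S ultra exp t t' → Red S ultra exp (.pair t u) (.pair t' u)
  | congPairR (t) {u u'} : Red S ultra exp u u' → Red S ultra exp (.pair t u) (.pair t u')
  | congElimWith1L {t t'} (x A u) : Red S ultra exp t t' →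
      Red S ultra exp (.elimWith1 t x A u) (.elimWith1 t' x A u)
  | congElimWith1R (t x A) {u u'} : Red S ultra exp u u' →
      Red S ultra exp (.elimWith1 t x A u) (.elimWith1 t x A u')
  | congElimWith2L {t t'} (x A u) : Red S ultra exp t t' →
      Red S ultra exp (.elimWith2 t x A u) (.elimWith2 t' x A u)
  | congElimWith2R (t x A) {u u'} : Red S ultra exp u u' →
      Red S ultra exp (.elimWith2 t x A u) (.elimWith2 t x A u')
  | congInl {t t'} : Red S ultra exp t t' → Red S ultra exp (.inl t) (.inl t')
  | congInr {t t'} : Red S ultra exp t t' → Red S ultra exp (.inr t) (.inr t')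
  | congElimPlusL {t t'} (x A u y B v) : Red S ultra exp t t' →
      Red S ultra exp (.elimPlus t x A u y B v) (.elimPlus t' x A u y B v)
  | congElimPlusM (t x A) {u u'} (y B v) : Red S ultra exp u u' →
      Red S ultra exp (.elimPlus t x A u y B v) (.elimPlus t x A u' y B v)
  | congElimPlusR (t x A u y B) {v v'} : Red S ultra exp v v' →
      Red S ultra exp (.elimPlus t x A u y B v) (.elimPlus t x A u y B v')
  | congBang {t t'} : Red S ultra exp t t' → Red S ultra exp (.bang t) (.bang t')
  | congElimBangL {t t'} (x A u) : Red S ultra exp t t' →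
      Red S ultra exp (.elimBang t x A u) (.elimBang t' x A u)
  | congElimBangR (t x A) {u u'} : Red S ultra exp u u' →
      Red S ultra exp (.elimBang t x A u) (.elimBang t x A u')
  | congTlam (X) {t t'} : Red S ultra exp t t' → Red S ultra exp (.tlam X t) (.tlam X t')
  | congTapp {t t'} (A) : Red S ultra exp t t' → Red S ultra exp (.tapp t A) (.tapp t' A)

variable (S : Type) [Semiring S]

/-- Reflexive-transitive closure of reduction. -/
abbrev RedStar (ultra exp : Bool) : Tm S → Tm S → Prop :=
  Relation.ReflTransGen (Red S ultra exp)

/-- Convertibility: reflexive-symmetric-transitive closure of reduction. -/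
abbrev Conv (exp : Bool) : Tm S → Tm S → Prop := Relation.EqvGen (Red S false exp)

/-- `t` strongly normalises: every reduction sequence issued from `t` is finite. -/
def SNt (ultra exp : Bool) (t : Tm S) : Prop := Acc (fun a b => Red S ultra exp b a) t

/-- `t` is irreducible (w.r.t. plain reduction, with or without the ! rules). -/
def Irred (exp : Bool) (t : Tm S) : Prop := ∀ u, ¬ Red S false exp t u

/-- `t` is an introduction. -/
def Tm.isIntro : Tm S → Prop
  | .star _ => True
  | .lam _ _ _ => True
  | .tens _ _ => True
  | .unit => True
  | .pair _ _ => True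
  | .inl _ => True
  | .inr _ => True
  | .bang _ => True
  | .tlam _ _ => True
  | _ => False

/-- Reducibility candidates: CR1–CR4 (w.r.t. ultra-reduction). -/
def isCand (E : Set (Tm S)) : Prop :=
  (∀ t ∈ E, SNt S true true t) ∧
  (∀ t ∈ E, ∀ t', Red S true true t t' → t' ∈ E) ∧
  (∀ t, ¬ t.isIntro → (∀ t', Red S true true t t' → t' ∈ E) → t ∈ E) ∧
  (∀ t ∈ E, ∀ X A, t.substT X A ∈ E)

/-- The reducibility-candidate interpretation of propositions. -/
def interp : Ty → (String → Set (Tm S)) → Set (Tm S)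
  | .var X, ρ => ρ X
  | .one, _ => {t | SNt S true true t}
  | .top, _ => {t | SNt S true true t}
  | .zero, _ => {t | SNt S true true t}
  | .lolli A B, ρ =>
      {t | SNt S true true t ∧ ∀ x C u, RedStar S true true t (.lam x C u) →
        ∀ v ∈ interp A ρ, u.subst x v ∈ interp B ρ}
  | .tens A B, ρ =>
      {t | SNt S true true t ∧ ∀ u v, RedStar S true true t (.tens u v) →
        u ∈ interp A ρ ∧ v ∈ interp B ρ}
  | .withT A B, ρ =>
      {t | SNt S true true t ∧ ∀ u v, RedStar S true true t (.pair u v) →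
        u ∈ interp A ρ ∧ v ∈ interp B ρ}
  | .plus A B, ρ =>
      {t | SNt S true true t ∧
        (∀ u, RedStar S true true t (.inl u) → u ∈ interp A ρ) ∧
        (∀ v, RedStar S true true t (.inr v) → v ∈ interp B ρ)}
  | .bang A, ρ =>
      {t | SNt S true true t ∧ ∀ u, RedStar S true true t (.bang u) → u ∈ interp A ρ}
  | .all X A, ρ =>
      {t | SNt S true true t ∧ ∀ u, RedStar S true true t (.tlam X u) →
        ∀ E, isCand S E → ∀ B, u.substT X B ∈ interp A (Function.update ρ X E)}

/-- The set 𝒱 of vector propositions, generated by 1 and &. -/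
inductive IsVec : Ty → Prop where
  | one : IsVec .one
  | withT {A B} : IsVec A → IsVec B → IsVec (.withT A B)

/-- The zero vector 0_A of a proposition A ∈ 𝒱. -/
def zeroTm : Ty → Tm S
  | .withT A B => .pair (zeroTm A) (zeroTm B)
  | _ => .star 0

/-- Dimension d(A) of a proposition: the number of occurrences of 1. -/
def dim : Ty → ℕ
  | .one => 1
  | .withT A B => dim A + dim B
  | _ => 0

/-- The vector associated to an (irreducible) proof-term of a proposition in 𝒱. -/
def tmVec : Tm S → List S
  | .star a => [a]
  | .pair u v => tmVec u ++ tmVec v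
  | _ => []

/-- The closed irreducible proof-term ū^A of A ∈ 𝒱 associated to a vector. -/
def encodeL : Ty → List S → Tm S
  | .one, l => .star (l.headD 0)
  | .withT A B, l => .pair (encodeL A (l.take (dim A))) (encodeL B (l.drop (dim A)))
  | _, _ => .star 0

/-- The measure μ on proof-terms. -/
def mu : Tm S → ℕ
  | .var _ => 0
  | .sum t u => 1 + max (mu t) (mu u)
  | .prod _ t => 1 + mu t
  | .star _ => 1
  | .elimOne t u => 1 + mu t + mu u
  | .lam _ _ t => 1 + mu t
  | .app t u => 1 + mu t + mu u
  | .tens t u => 1 + mu t + mu u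
  | .elimTens t _ _ _ _ u => 1 + mu t + mu u
  | .unit => 1
  | .elimZero t => 1 + mu t
  | .pair t u => 1 + max (mu t) (mu u)
  | .elimWith1 t _ _ u => 1 + mu t + mu u
  | .elimWith2 t _ _ u => 1 + mu t + mu u
  | .inl t => 1 + mu t
  | .inr t => 1 + mu t
  | .elimPlus t _ _ u _ _ v => 1 + mu t + max (mu u) (mu v)
  | .bang t => 1 + mu t
  | .elimBang t _ _ u => 1 + mu t + mu u
  | .tlam _ t => 1 + mu t
  | .tapp t _ => 1 + mu t

/-- Elimination contexts of the exponential-free LS²-calculus, as proof-terms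
with a single free (hole) variable `h`. -/
inductive IsElimCtx (h : String) : Tm S → Prop where
  | hole : IsElimCtx h (.var h)
  | elimOne {K} {u : Tm S} : IsElimCtx h K → u.fv = [] → IsElimCtx h (.elimOne K u)
  | app {K} {u : Tm S} : IsElimCtx h K → u.fv = [] → IsElimCtx h (.app K u)
  | elimTens {K x A y B} {v : Tm S} : IsElimCtx h K →
      (∀ z ∈ v.fv, z = x ∨ z = y) → IsElimCtx h (.elimTens K x A y B v)
  | elimZero {K} : IsElimCtx h K → IsElimCtx h (.elimZero K)
  | elimWith1 {K x A} {r : Tm S} : IsElimCtx h K → (∀ z ∈ r.fv, z = x) →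
      IsElimCtx h (.elimWith1 K x A r)
  | elimWith2 {K x A} {r : Tm S} : IsElimCtx h K → (∀ z ∈ r.fv, z = x) →
      IsElimCtx h (.elimWith2 K x A r)
  | elimPlus {K x A y B} {r s : Tm S} : IsElimCtx h K → (∀ z ∈ r.fv, z = x) →
      (∀ z ∈ s.fv, z = y) → IsElimCtx h (.elimPlus K x A r y B s)
  | tapp {K} (A) : IsElimCtx h K → IsElimCtx h (.tapp K A)

end LS2
namespace LS2

variable {S : Type} [Semiring S]

/-- Immediate subterm relation. -/
inductive ImmSub : Tm S → Tm S → Prop where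
  | sumL (t u) : ImmSub t (.sum t u)
  | sumR (t u) : ImmSub u (.sum t u)
  | prod (a t) : ImmSub t (.prod a t)
  | elimOneL (t u) : ImmSub t (.elimOne t u)
  | elimOneR (t u) : ImmSub u (.elimOne t u)
  | lam (x A t) : ImmSub t (.lam x A t)
  | appL (t u) : ImmSub t (.app t u)
  | appR (t u) : ImmSub u (.app t u)
  | tensL (t u) : ImmSub t (.tens t u)
  | tensR (t u) : ImmSub u (.tens t u)
  | elimTensL (t x A y B u) : ImmSub t (.elimTens t x A y B u)
  | elimTensR (t x A y B u) : ImmSub u (.elimTens t x A y B u)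
  | elimZero (t) : ImmSub t (.elimZero t)
  | pairL (t u) : ImmSub t (.pair t u)
  | pairR (t u) : ImmSub u (.pair t u)
  | elimWith1L (t x A u) : ImmSub t (.elimWith1 t x A u)
  | elimWith1R (t x A u) : ImmSub u (.elimWith1 t x A u)
  | elimWith2L (t x A u) : ImmSub t (.elimWith2 t x A u)
  | elimWith2R (t x A u) : ImmSub u (.elimWith2 t x A u)
  | inl (t) : ImmSub t (.inl t)
  | inr (t) : ImmSub t (.inr t)
  | elimPlusL (t x A u y B v) : ImmSub t (.elimPlus t x A u y B v)
  | elimPlusM (t x A u y B v) : ImmSub u (.elimPlus t x A u y B v)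
  | elimPlusR (t x A u y B v) : ImmSub v (.elimPlus t x A u y B v)
  | bang (t) : ImmSub t (.bang t)
  | elimBangL (t x A u) : ImmSub t (.elimBang t x A u)
  | elimBangR (t x A u) : ImmSub u (.elimBang t x A u)
  | tlam (X t) : ImmSub t (.tlam X t)
  | tapp (t A) : ImmSub t (.tapp t A)

/-- A reduction of an immediate subterm lifts to the whole term. -/
lemma imm_lift {s t s' : Tm S} (hs : ImmSub s t) (hr : Red S true true s s') :
    ∃ t', Red S true true t t' ∧ ImmSub s' t' := by
  cases hs with
  | sumL t u => exact ⟨_, .congSumL _ hr, .sumL _ _⟩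
  | sumR t u => exact ⟨_, .congSumR _ hr, .sumR _ _⟩
  | prod a t => exact ⟨_, .congProd _ hr, .prod _ _⟩
  | elimOneL t u => exact ⟨_, .congElimOneL _ hr, .elimOneL _ _⟩
  | elimOneR t u => exact ⟨_, .congElimOneR _ hr, .elimOneR _ _⟩
  | lam x A t => exact ⟨_, .congLam _ _ hr, .lam _ _ _⟩
  | appL t u => exact ⟨_, .congAppL _ hr, .appL _ _⟩
  | appR t u => exact ⟨_, .congAppR _ hr, .appR _ _⟩
  | tensL t u => exact ⟨_, .congTensL _ hr, .tensL _ _⟩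
  | tensR t u => exact ⟨_, .congTensR _ hr, .tensR _ _⟩
  | elimTensL t x A y B u => exact ⟨_, .congElimTensL _ _ _ _ _ hr, .elimTensL _ _ _ _ _ _⟩
  | elimTensR t x A y B u => exact ⟨_, .congElimTensR _ _ _ _ _ hr, .elimTensR _ _ _ _ _ _⟩
  | elimZero t => exact ⟨_, .congElimZero hr, .elimZero _⟩
  | pairL t u => exact ⟨_, .congPairL _ hr, .pairL _ _⟩
  | pairR t u => exact ⟨_, .congPairR _ hr, .pairR _ _⟩
  | elimWith1L t x A u => exact ⟨_, .congElimWith1L _ _ _ hr, .elimWith1L _ _ _ _⟩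
  | elimWith1R t x A u => exact ⟨_, .congElimWith1R _ _ _ hr, .elimWith1R _ _ _ _⟩
  | elimWith2L t x A u => exact ⟨_, .congElimWith2L _ _ _ hr, .elimWith2L _ _ _ _⟩
  | elimWith2R t x A u => exact ⟨_, .congElimWith2R _ _ _ hr, .elimWith2R _ _ _ _⟩
  | inl t => exact ⟨_, .congInl hr, .inl _⟩
  | inr t => exact ⟨_, .congInr hr, .inr _⟩
  | elimPlusL t x A u y B v => exact ⟨_, .congElimPlusL _ _ _ _ _ _ hr, .elimPlusL _ _ _ _ _ _ _⟩
  | elimPlusM t x A u y B v => exact ⟨_, .congElimPlusM _ _ _ _ _ _ hr, .elimPlusM _ _ _ _ _ _ _⟩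
  | elimPlusR t x A u y B v => exact ⟨_, .congElimPlusR _ _ _ _ _ _ hr, .elimPlusR _ _ _ _ _ _ _⟩
  | bang t => exact ⟨_, .congBang hr, .bang _⟩
  | elimBangL t x A u => exact ⟨_, .congElimBangL _ _ _ hr, .elimBangL _ _ _ _⟩
  | elimBangR t x A u => exact ⟨_, .congElimBangR _ _ _ hr, .elimBangR _ _ _ _⟩
  | tlam X t => exact ⟨_, .congTlam _ hr, .tlam _ _⟩
  | tapp t A => exact ⟨_, .congTapp _ hr, .tapp _ _⟩

lemma snt_imm {t : Tm S} (ht : SNt S true true t) :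
    ∀ s, ImmSub s t → SNt S true true s := by
  induction ht with
  | intro t h ih =>
    intro s hs
    exact Acc.intro _ fun s' hr => by
      obtain ⟨t', ht', hs'⟩ := imm_lift hs hr
      exact ih t' ht' s' hs'

lemma snt_sub {s t : Tm S} (h : Relation.ReflTransGen (@ImmSub S) s t)
    (ht : SNt S true true t) : SNt S true true s := by
  induction h with
  | refl => exact ht
  | tail h1 h2 ih => exact ih (snt_imm ht _ h2)

lemma sub_lift {s t s' : Tm S} (hs : Relation.ReflTransGen (@ImmSub S) s t)
    (hr : Red S true true s s') :
    ∃ t', Red S true true t t' ∧ Relation.ReflTransGen (@ImmSub S) s' t' := by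
  induction hs with
  | refl => exact ⟨s', hr, .refl⟩
  | tail h1 h2 ih =>
    obtain ⟨b', hb', hsb⟩ := ih
    obtain ⟨t', ht', hbt⟩ := imm_lift h2 hb'
    exact ⟨t', ht', hsb.tail hbt⟩

lemma snt_star (a : S) : SNt S true true (.star a) :=
  Acc.intro _ fun _ hr => nomatch hr

lemma snt_unit : SNt S true true (.unit : Tm S) :=
  Acc.intro _ fun _ hr => nomatch hr

lemma snt_lam {u : Tm S} (h : SNt S true true u) (x A) :
    SNt S true true (.lam x A u) := by
  induction h with
  | intro u _ ih =>
    exact Acc.intro _ fun r hr => by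
      cases hr with
      | congLam _ _ h' => exact ih _ h'

lemma snt_bang {u : Tm S} (h : SNt S true true u) :
    SNt S true true (.bang u) := by
  induction h with
  | intro u _ ih =>
    exact Acc.intro _ fun r hr => by
      cases hr with
      | congBang h' => exact ih _ h'

lemma snt_tlam {u : Tm S} (h : SNt S true true u) (X) :
    SNt S true true (.tlam X u) := by
  induction h with
  | intro u _ ih =>
    exact Acc.intro _ fun r hr => by
      cases hr with
      | congTlam _ h' => exact ih _ h'

lemma snt_pair {t u : Tm S} (ht : SNt S true true t) (hu : SNt S true true u) :
    SNt S true true (.pair t u) := by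
  induction ht generalizing u with
  | intro t _ ihT =>
    induction hu with
    | intro u hu ihU =>
      exact Acc.intro _ fun r hr => by
        cases hr with
        | congPairL _ h' => exact ihT _ h' (Acc.intro u hu)
        | congPairR _ h' => exact ihU _ h'

end LS2
namespace LS2

variable {S : Type} [Semiring S]

lemma snt_prod_key {t : Tm S} (ht : SNt S true true t) :
    ∀ s, Relation.ReflTransGen (@ImmSub S) s t → ∀ a, SNt S true true (.prod a s) := by
  induction ht with
  | intro t h ih =>
    intro s
    induction s with
    | var y =>
      intro hsub a
      refine Acc.intro _ fun r hr => ?_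
      cases hr with
      | ultraProd _ _ _ => exact snt_sub hsub (Acc.intro t h)
      | congProd _ h' =>
        obtain ⟨t', ht', hst⟩ := sub_lift hsub h'
        exact ih t' ht' _ hst a
    | sum u v ihu ihv =>
      intro hsub a
      refine Acc.intro _ fun r hr => ?_
      cases hr with
      | ultraProd _ _ _ => exact snt_sub hsub (Acc.intro t h)
      | congProd _ h' =>
        obtain ⟨t', ht', hst⟩ := sub_lift hsub h'
        exact ih t' ht' _ hst a
    | prod b u ihu =>
      intro hsub a
      refine Acc.intro _ fun r hr => ?_
      cases hr with
      | ultraProd _ _ _ => exact snt_sub hsub (Acc.intro t h)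
      | congProd _ h' =>
        obtain ⟨t', ht', hst⟩ := sub_lift hsub h'
        exact ih t' ht' _ hst a
    | star b =>
      intro hsub a
      refine Acc.intro _ fun r hr => ?_
      cases hr with
      | prodStar => exact snt_star _
      | ultraProd _ _ _ => exact snt_sub hsub (Acc.intro t h)
      | congProd _ h' =>
        obtain ⟨t', ht', hst⟩ := sub_lift hsub h'
        exact ih t' ht' _ hst a
    | elimOne u v ihu ihv =>
      intro hsub a
      refine Acc.intro _ fun r hr => ?_
      cases hr with
      | ultraProd _ _ _ => exact snt_sub hsub (Acc.intro t h)
      | congProd _ h' =>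
        obtain ⟨t', ht', hst⟩ := sub_lift hsub h'
        exact ih t' ht' _ hst a
    | lam x A u ihu =>
      intro hsub a
      refine Acc.intro _ fun r hr => ?_
      cases hr with
      | prodLam => exact snt_lam (ihu (hsub.head (.lam _ _ _)) a) x A
      | ultraProd _ _ _ => exact snt_sub hsub (Acc.intro t h)
      | congProd _ h' =>
        obtain ⟨t', ht', hst⟩ := sub_lift hsub h'
        exact ih t' ht' _ hst a
    | app u v ihu ihv =>
      intro hsub a
      refine Acc.intro _ fun r hr => ?_
      cases hr with
      | ultraProd _ _ _ => exact snt_sub hsub (Acc.intro t h)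
      | congProd _ h' =>
        obtain ⟨t', ht', hst⟩ := sub_lift hsub h'
        exact ih t' ht' _ hst a
    | tens u v ihu ihv =>
      intro hsub a
      refine Acc.intro _ fun r hr => ?_
      cases hr with
      | ultraProd _ _ _ => exact snt_sub hsub (Acc.intro t h)
      | congProd _ h' =>
        obtain ⟨t', ht', hst⟩ := sub_lift hsub h'
        exact ih t' ht' _ hst a
    | elimTens u x A y B v ihu ihv =>
      intro hsub a
      refine Acc.intro _ fun r hr => ?_
      cases hr with
      | ultraProd _ _ _ => exact snt_sub hsub (Acc.intro t h)
      | congProd _ h' =>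
        obtain ⟨t', ht', hst⟩ := sub_lift hsub h'
        exact ih t' ht' _ hst a
    | unit =>
      intro hsub a
      refine Acc.intro _ fun r hr => ?_
      cases hr with
      | prodUnit => exact snt_unit
      | ultraProd _ _ _ => exact snt_sub hsub (Acc.intro t h)
      | congProd _ h' =>
        obtain ⟨t', ht', hst⟩ := sub_lift hsub h'
        exact ih t' ht' _ hst a
    | elimZero u ihu =>
      intro hsub a
      refine Acc.intro _ fun r hr => ?_
      cases hr with
      | ultraProd _ _ _ => exact snt_sub hsub (Acc.intro t h)
      | congProd _ h' =>
        obtain ⟨t', ht', hst⟩ := sub_lift hsub h'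
        exact ih t' ht' _ hst a
    | pair u v ihu ihv =>
      intro hsub a
      refine Acc.intro _ fun r hr => ?_
      cases hr with
      | prodPair =>
        exact snt_pair (ihu (hsub.head (.pairL _ _)) a) (ihv (hsub.head (.pairR _ _)) a)
      | ultraProd _ _ _ => exact snt_sub hsub (Acc.intro t h)
      | congProd _ h' =>
        obtain ⟨t', ht', hst⟩ := sub_lift hsub h'
        exact ih t' ht' _ hst a
    | elimWith1 u x A v ihu ihv =>
      intro hsub a
      refine Acc.intro _ fun r hr => ?_
      cases hr with
      | ultraProd _ _ _ => exact snt_sub hsub (Acc.intro t h)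
      | congProd _ h' =>
        obtain ⟨t', ht', hst⟩ := sub_lift hsub h'
        exact ih t' ht' _ hst a
    | elimWith2 u x A v ihu ihv =>
      intro hsub a
      refine Acc.intro _ fun r hr => ?_
      cases hr with
      | ultraProd _ _ _ => exact snt_sub hsub (Acc.intro t h)
      | congProd _ h' =>
        obtain ⟨t', ht', hst⟩ := sub_lift hsub h'
        exact ih t' ht' _ hst a
    | inl u ihu =>
      intro hsub a
      refine Acc.intro _ fun r hr => ?_
      cases hr with
      | ultraProd _ _ _ => exact snt_sub hsub (Acc.intro t h)
      | congProd _ h' =>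
        obtain ⟨t', ht', hst⟩ := sub_lift hsub h'
        exact ih t' ht' _ hst a
    | inr u ihu =>
      intro hsub a
      refine Acc.intro _ fun r hr => ?_
      cases hr with
      | ultraProd _ _ _ => exact snt_sub hsub (Acc.intro t h)
      | congProd _ h' =>
        obtain ⟨t', ht', hst⟩ := sub_lift hsub h'
        exact ih t' ht' _ hst a
    | elimPlus u x A v y B w ihu ihv ihw =>
      intro hsub a
      refine Acc.intro _ fun r hr => ?_
      cases hr with
      | ultraProd _ _ _ => exact snt_sub hsub (Acc.intro t h)
      | congProd _ h' =>
        obtain ⟨t', ht', hst⟩ := sub_lift hsub h'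
        exact ih t' ht' _ hst a
    | bang u ihu =>
      intro hsub a
      refine Acc.intro _ fun r hr => ?_
      cases hr with
      | prodBang _ => exact snt_bang (ihu (hsub.head (.bang _)) a)
      | ultraProd _ _ _ => exact snt_sub hsub (Acc.intro t h)
      | congProd _ h' =>
        obtain ⟨t', ht', hst⟩ := sub_lift hsub h'
        exact ih t' ht' _ hst a
    | elimBang u x A v ihu ihv =>
      intro hsub a
      refine Acc.intro _ fun r hr => ?_
      cases hr with
      | ultraProd _ _ _ => exact snt_sub hsub (Acc.intro t h)
      | congProd _ h' =>
        obtain ⟨t', ht', hst⟩ := sub_lift hsub h'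
        exact ih t' ht' _ hst a
    | tlam X u ihu =>
      intro hsub a
      refine Acc.intro _ fun r hr => ?_
      cases hr with
      | prodTlam => exact snt_tlam (ihu (hsub.head (.tlam _ _)) a) X
      | ultraProd _ _ _ => exact snt_sub hsub (Acc.intro t h)
      | congProd _ h' =>
        obtain ⟨t', ht', hst⟩ := sub_lift hsub h'
        exact ih t' ht' _ hst a
    | tapp u A ihu =>
      intro hsub a
      refine Acc.intro _ fun r hr => ?_
      cases hr with
      | ultraProd _ _ _ => exact snt_sub hsub (Acc.intro t h)
      | congProd _ h' =>
        obtain ⟨t', ht', hst⟩ := sub_lift hsub h'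
        exact ih t' ht' _ hst a

end LS2

/-- Strong normalisation (for ultra-reduction) of a scalar product. -/
theorem sn_prod {S : Type} [Semiring S] {t : LS2.Tm S}
    (ht : LS2.SNt S true true t) (a : S) :
    LS2.SNt S true true (.prod a t) := by
  exact LS2.snt_prod_key ht t .refl a
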